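/- Let R > 0 and φ > 0, let N and K be positive integers, let λ : Fin N → ℝ, and let μ : Fin K → ℝ satisfy ∑_{i=1}^{K} μ_i = 0. Then (KN)^{-1} ∑_{n=1}^{N} ∑_{i=1}^{K} E_τ[ log{ 1 + e^{−2R(λ_n + μ_i)} e^{−2φ√R τ − 2R} } ] ≥ N^{-1} ∑_{n=1}^{N} E_τ[ log{ 1 + e^{−2Rλ_n} e^{−2φ√R τ − 2R} } ]. -/
import Mathlib

open MeasureTheory Real

/-- Expectation with respect to a standard Gaussian variable `τ`. -/
noncomputable def gaussExp (p : ℝ → ℝ) : ℝ :=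
  ∫ τ : ℝ, (Real.sqrt (2 * Real.pi))⁻¹ * Real.exp (-τ ^ 2 / 2) * p τ

lemma softplus_convex : ConvexOn ℝ Set.univ (fun x : ℝ => Real.log (1 + Real.exp x)) := by
  have hpos : ∀ x : ℝ, (0:ℝ) < 1 + Real.exp x := fun x => by positivity
  have hd : ∀ x : ℝ, HasDerivAt (fun x : ℝ => Real.log (1 + Real.exp x))
      (Real.exp x / (1 + Real.exp x)) x := by
    intro x
    have h1 : HasDerivAt (fun x : ℝ => 1 + Real.exp x) (Real.exp x) x :=
      (Real.hasDerivAt_exp x).const_add 1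
    simpa using h1.log (hpos x).ne'
  have hd2 : ∀ x : ℝ, HasDerivAt (fun x : ℝ => Real.exp x / (1 + Real.exp x))
      (Real.exp x / (1 + Real.exp x) ^ 2) x := by
    intro x
    have h1 : HasDerivAt (fun x : ℝ => 1 + Real.exp x) (Real.exp x) x :=
      (Real.hasDerivAt_exp x).const_add 1
    have h := (Real.hasDerivAt_exp x).div h1 (hpos x).ne'
    have hval : (Real.exp x * (1 + Real.exp x) - Real.exp x * Real.exp x) / (1 + Real.exp x) ^ 2
        = Real.exp x / (1 + Real.exp x) ^ 2 := by ring
    rwa [hval] at h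
  apply convexOn_of_hasDerivWithinAt2_nonneg convex_univ
    (f' := fun x => Real.exp x / (1 + Real.exp x))
    (f'' := fun x => Real.exp x / (1 + Real.exp x) ^ 2)
  · exact (Continuous.continuousOn (continuous_iff_continuousAt.2
      (fun x => (hd x).differentiableAt.continuousAt)))
  · exact fun x _ => (hd x).hasDerivWithinAt
  · exact fun x _ => (hd2 x).hasDerivWithinAt
  · exact fun x _ => by positivity

lemma jensen_soft {K : ℕ} (hK : 0 < K) (p : Fin K → ℝ) (C : ℝ)
    (hmean : ∑ i, p i = K * C) :
    Real.log (1 + Real.exp C) ≤ (K : ℝ)⁻¹ * ∑ i, Real.log (1 + Real.exp (p i)) := by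
  have hK' : (K : ℝ) ≠ 0 := Nat.cast_ne_zero.2 hK.ne'
  have h := softplus_convex.map_sum_le (t := Finset.univ)
    (w := fun _ : Fin K => (K : ℝ)⁻¹) (p := p)
    (fun i _ => by positivity)
    (by simp [Finset.card_univ]; field_simp)
    (fun i _ => Set.mem_univ _)
  have hsum : ∑ i, (K : ℝ)⁻¹ • p i = C := by
    simp only [smul_eq_mul, ← Finset.mul_sum, hmean]
    field_simp
  rw [hsum] at h
  simpa [smul_eq_mul, ← Finset.mul_sum] using h

lemma log_one_add_exp_le (s : ℝ) : Real.log (1 + Real.exp s) ≤ Real.log 2 + |s| := by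
  have h1 : Real.exp s ≤ Real.exp |s| := Real.exp_le_exp.2 (le_abs_self s)
  have h2 : (1:ℝ) ≤ Real.exp |s| := Real.one_le_exp (abs_nonneg s)
  have hle : (1:ℝ) + Real.exp s ≤ 2 * Real.exp |s| := by linarith
  calc Real.log (1 + Real.exp s) ≤ Real.log (2 * Real.exp |s|) :=
        Real.log_le_log (by positivity) hle
    _ = Real.log 2 + |s| := by rw [Real.log_mul (by norm_num) (Real.exp_pos _).ne', Real.log_exp]

lemma integrable_aux (A B C : ℝ) :
    Integrable (fun τ : ℝ => (Real.sqrt (2 * Real.pi))⁻¹ * Real.exp (-τ ^ 2 / 2) *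
      Real.log (1 + Real.exp A * Real.exp (B * τ - C))) := by
  have harg : ∀ x : ℝ, -(1/2 : ℝ) * x ^ 2 = -x ^ 2 / 2 := fun x => by ring
  have hgauss : Integrable (fun τ : ℝ => Real.exp (-τ ^ 2 / 2)) := by
    have h := integrable_exp_neg_mul_sq (b := (1/2 : ℝ)) (by norm_num)
    simpa only [harg] using h
  have hgauss1 : Integrable (fun τ : ℝ => |τ * Real.exp (-τ ^ 2 / 2)|) := by
    have h := (integrable_mul_exp_neg_mul_sq (b := (1/2 : ℝ)) (by norm_num)).abs
    simpa only [harg] using h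
  set d : ℝ → ℝ := fun τ => (Real.sqrt (2 * Real.pi))⁻¹ * Real.exp (-τ ^ 2 / 2) with hdd
  have hdnn : ∀ τ, 0 ≤ d τ := fun τ => by positivity
  refine Integrable.mono'
    (g := fun τ => (Real.sqrt (2 * Real.pi))⁻¹ *
      ((Real.log 2 + |A - C|) * Real.exp (-τ ^ 2 / 2) + |B| * |τ * Real.exp (-τ ^ 2 / 2)|))
    (((hgauss.const_mul _).add (hgauss1.const_mul _)).const_mul _) ?_
    (Filter.Eventually.of_forall fun τ => ?_)
  · refine Continuous.aestronglyMeasurable ?_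
    refine Continuous.mul (by continuity) ?_
    refine Continuous.log (by continuity) (fun τ => ?_)
    positivity
  · have hlog0 : 0 ≤ Real.log (1 + Real.exp A * Real.exp (B * τ - C)) := by
      apply Real.log_nonneg
      nlinarith [Real.exp_pos A, Real.exp_pos (B * τ - C), mul_pos (Real.exp_pos A) (Real.exp_pos (B * τ - C))]
    have hbound : Real.log (1 + Real.exp A * Real.exp (B * τ - C))
        ≤ Real.log 2 + |A - C| + |B| * |τ| := by
      rw [← Real.exp_add]
      calc Real.log (1 + Real.exp (A + (B * τ - C))) ≤ Real.log 2 + |A + (B * τ - C)| :=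
            log_one_add_exp_le _
        _ ≤ Real.log 2 + (|A - C| + |B * τ|) := by
            have : |A + (B * τ - C)| ≤ |A - C| + |B * τ| := by
              have := abs_add_le (A - C) (B * τ)
              have he : A + (B * τ - C) = (A - C) + B * τ := by ring
              rw [he]; exact this
            linarith
        _ = Real.log 2 + |A - C| + |B| * |τ| := by rw [abs_mul]; ring
    rw [Real.norm_eq_abs, abs_of_nonneg (mul_nonneg (hdnn τ) hlog0)]
    have hdτ : 0 ≤ d τ := hdnn τ
    calc d τ * Real.log (1 + Real.exp A * Real.exp (B * τ - C))
        ≤ d τ * (Real.log 2 + |A - C| + |B| * |τ|) :=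
          mul_le_mul_of_nonneg_left hbound hdτ
      _ = (Real.sqrt (2 * Real.pi))⁻¹ *
          ((Real.log 2 + |A - C|) * Real.exp (-τ ^ 2 / 2) + |B| * |τ * Real.exp (-τ ^ 2 / 2)|) := by
          rw [hdd]
          rw [abs_mul, abs_of_nonneg (Real.exp_pos (-τ ^ 2 / 2)).le]
          ring

/-- The cluster-based tightened lower bound `F_M^l` of the paper, obtained by Jensen's
inequality within each cluster. -/
theorem FMl_le_F
    (R φ : ℝ) (hR : 0 < R) (hφ : 0 < φ)
    (N K : ℕ) (hN : 0 < N) (hK : 0 < K)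
    (lam : Fin N → ℝ) (μ : Fin K → ℝ) (hμsum : ∑ i, μ i = 0) :
    ((K * N : ℕ) : ℝ)⁻¹ * ∑ n, ∑ i, gaussExp (fun τ =>
        Real.log (1 + Real.exp (-2 * R * (lam n + μ i)) *
          Real.exp (-2 * φ * Real.sqrt R * τ - 2 * R))) ≥
      (N : ℝ)⁻¹ * ∑ n, gaussExp (fun τ =>
        Real.log (1 + Real.exp (-2 * R * lam n) *
          Real.exp (-2 * φ * Real.sqrt R * τ - 2 * R))) := by
  have hK' : (K : ℝ) ≠ 0 := Nat.cast_ne_zero.2 hK.ne'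
  have key : ∀ n : Fin N,
      gaussExp (fun τ => Real.log (1 + Real.exp (-2 * R * lam n) *
          Real.exp (-2 * φ * Real.sqrt R * τ - 2 * R)))
      ≤ (K : ℝ)⁻¹ * ∑ i, gaussExp (fun τ =>
          Real.log (1 + Real.exp (-2 * R * (lam n + μ i)) *
            Real.exp (-2 * φ * Real.sqrt R * τ - 2 * R))) := by
    intro n
    have int_g : Integrable (fun τ : ℝ => (Real.sqrt (2 * Real.pi))⁻¹ * Real.exp (-τ ^ 2 / 2) *
        Real.log (1 + Real.exp (-2 * R * lam n) *
          Real.exp (-2 * φ * Real.sqrt R * τ - 2 * R))) :=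
      integrable_aux (-2 * R * lam n) (-2 * φ * Real.sqrt R) (2 * R)
    have int_f : ∀ i : Fin K, Integrable (fun τ : ℝ =>
        (Real.sqrt (2 * Real.pi))⁻¹ * Real.exp (-τ ^ 2 / 2) *
        Real.log (1 + Real.exp (-2 * R * (lam n + μ i)) *
          Real.exp (-2 * φ * Real.sqrt R * τ - 2 * R))) := fun i =>
      integrable_aux (-2 * R * (lam n + μ i)) (-2 * φ * Real.sqrt R) (2 * R)
    unfold gaussExp
    rw [← integral_finset_sum _ (fun i _ => int_f i), ← integral_const_mul]
    refine integral_mono int_g ((integrable_finset_sum _ (fun i _ => int_f i)).const_mul _) ?_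
    intro τ
    have hdnn : (0:ℝ) ≤ (Real.sqrt (2 * Real.pi))⁻¹ * Real.exp (-τ ^ 2 / 2) := by positivity
    have hjen : Real.log (1 + Real.exp (-2 * R * lam n) *
          Real.exp (-2 * φ * Real.sqrt R * τ - 2 * R))
        ≤ (K : ℝ)⁻¹ * ∑ i, Real.log (1 + Real.exp (-2 * R * (lam n + μ i)) *
          Real.exp (-2 * φ * Real.sqrt R * τ - 2 * R)) := by
      simp only [← Real.exp_add]
      refine jensen_soft hK (fun i => -2 * R * (lam n + μ i) + (-2 * φ * Real.sqrt R * τ - 2 * R))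
        (-2 * R * lam n + (-2 * φ * Real.sqrt R * τ - 2 * R)) ?_
      have he : ∀ i : Fin K, -2 * R * (lam n + μ i) + (-2 * φ * Real.sqrt R * τ - 2 * R)
          = (-2 * R * lam n + (-2 * φ * Real.sqrt R * τ - 2 * R)) + (-2 * R) * μ i :=
        fun i => by ring
      rw [Finset.sum_congr rfl (fun i _ => he i), Finset.sum_add_distrib, ← Finset.mul_sum,
        hμsum, Finset.sum_const, Finset.card_univ, Fintype.card_fin]
      simp only [nsmul_eq_mul, mul_zero, add_zero]
    calc (Real.sqrt (2 * Real.pi))⁻¹ * Real.exp (-τ ^ 2 / 2) *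
          Real.log (1 + Real.exp (-2 * R * lam n) *
            Real.exp (-2 * φ * Real.sqrt R * τ - 2 * R))
        ≤ (Real.sqrt (2 * Real.pi))⁻¹ * Real.exp (-τ ^ 2 / 2) *
          ((K : ℝ)⁻¹ * ∑ i, Real.log (1 + Real.exp (-2 * R * (lam n + μ i)) *
            Real.exp (-2 * φ * Real.sqrt R * τ - 2 * R))) :=
          mul_le_mul_of_nonneg_left hjen hdnn
      _ = (K : ℝ)⁻¹ * ∑ i, (Real.sqrt (2 * Real.pi))⁻¹ * Real.exp (-τ ^ 2 / 2) *
            Real.log (1 + Real.exp (-2 * R * (lam n + μ i)) *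
              Real.exp (-2 * φ * Real.sqrt R * τ - 2 * R)) := by
          simp only [Finset.mul_sum]
          exact Finset.sum_congr rfl fun i _ => by ring
  rw [ge_iff_le]
  have hcast : ((K * N : ℕ) : ℝ)⁻¹ = (N : ℝ)⁻¹ * (K : ℝ)⁻¹ := by
    push_cast
    rw [mul_inv]
    ring
  rw [hcast, mul_assoc ((N:ℝ)⁻¹) ((K:ℝ)⁻¹)]
  have hNnn : (0:ℝ) ≤ (N : ℝ)⁻¹ := by positivity
  refine mul_le_mul_of_nonneg_left ?_ hNnn
  rw [Finset.mul_sum]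
  exact Finset.sum_le_sum fun n _ => key n
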